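/- Let l0,l1 ∈ ℝ and s0,s1 > 0 with (l0,s0) ≠ (l1,s1), and for θ ∈ (0,1) set m_θ(x) = (1−θ)·p_{l0,s0}(x) + θ·p_{l1,s1}(x). Then the Shannon negentropy F(θ) = ∫_ℝ m_θ(x)·log m_θ(x) dx is a strictly convex function of θ on (0,1). -/

import Mathlib

/-!
Since `t ↦ t log t` is strictly convex on `[0, ∞)` and the mixture is affine in `θ`, the
integrand is convex in `θ` at every `x`, and strictly so wherever the two densities differ.
Cauchy densities with different parameters differ on a nonempty open set, which has positive
measure, so the strict inequality survives integration. The integrals exist because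
`|t log t| ≤ 4 t^(3/4) + t²` and the mixture is `O((1 + x²)⁻¹)`, whose `3/4`-th power is
integrable.
-/

open MeasureTheory Real

/-- The Cauchy density with location `l` and scale `s`. -/
noncomputable def cauchyPdf (l s x : ℝ) : ℝ := s / (π * (s ^ 2 + (x - l) ^ 2))

open Set

theorem integral_lt_integral_of_ae_le_of_measure_setOf_lt_ne_zero {X : Type*}
    [MeasurableSpace X] {μ : Measure X} {f g : X → ℝ} (hf : Integrable f μ)
    (hg : Integrable g μ) (hle : f ≤ᵐ[μ] g) (hlt : μ {x | f x < g x} ≠ 0) :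
    ∫ x, f x ∂μ < ∫ x, g x ∂μ := by
  rw [← sub_pos, ← integral_sub hg hf, integral_pos_iff_support_of_nonneg_ae
    (hle.mono fun x => sub_nonneg.2) (hg.sub hf)]
  refine pos_iff_ne_zero.2 (mt (measure_mono_null fun x hx => ?_) hlt)
  exact (sub_pos.2 hx).ne'

theorem strictConvexOn_integral_comp_mixture {X : Type*} [MeasurableSpace X]
    {μ : Measure X} {s : Set ℝ} {φ : ℝ → ℝ} (hφ : StrictConvexOn ℝ s φ)
    {p q : X → ℝ} (hp : ∀ x, p x ∈ s) (hq : ∀ x, q x ∈ s)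
    (hint : ∀ θ ∈ Icc (0 : ℝ) 1, Integrable (fun x => φ ((1 - θ) * p x + θ * q x)) μ)
    (hpq : ¬ p =ᵐ[μ] q) :
    StrictConvexOn ℝ (Icc 0 1) (fun θ => ∫ x, φ ((1 - θ) * p x + θ * q x) ∂μ) := by
  refine ⟨convex_Icc 0 1, fun θ₁ hθ₁ θ₂ hθ₂ hθ a b ha hb hab => ?_⟩
  set m : ℝ → X → ℝ := fun θ x => (1 - θ) * p x + θ * q x
  have hm_mem (θ : ℝ) (hθ : θ ∈ Icc (0 : ℝ) 1) (x : X) : m θ x ∈ s := by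
    simpa [m, smul_eq_mul] using hφ.1 (hp x) (hq x) (sub_nonneg.2 hθ.2) hθ.1 (by ring)
  have hm_affine (x : X) : m (a * θ₁ + b * θ₂) x = a * m θ₁ x + b * m θ₂ x := by
    simp only [m]
    linear_combination (-(p x)) * hab
  have hm_ne {x : X} (hx : p x ≠ q x) : m θ₁ x ≠ m θ₂ x := by
    have : m θ₁ x - m θ₂ x = (θ₁ - θ₂) * (q x - p x) := by simp only [m]; ring
    rw [← sub_ne_zero, this]
    exact mul_ne_zero (sub_ne_zero.2 hθ) (sub_ne_zero.2 hx.symm)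
  have hθ₁₂ : a • θ₁ + b • θ₂ ∈ Icc (0 : ℝ) 1 := convex_Icc 0 1 hθ₁ hθ₂ ha.le hb.le hab
  have hint₁₂ := ((hint θ₁ hθ₁).const_mul a).add ((hint θ₂ hθ₂).const_mul b)
  change ∫ x, φ (m (a * θ₁ + b * θ₂) x) ∂μ < a * ∫ x, φ (m θ₁ x) ∂μ + b * ∫ x, φ (m θ₂ x) ∂μ
  rw [← integral_const_mul, ← integral_const_mul,
    ← integral_add ((hint θ₁ hθ₁).const_mul a) ((hint θ₂ hθ₂).const_mul b)]
  refine integral_lt_integral_of_ae_le_of_measure_setOf_lt_ne_zero (hint _ hθ₁₂) hint₁₂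
    (ae_of_all _ fun x => ?_) ?_
  · show φ (m _ x) ≤ a * φ (m θ₁ x) + b * φ (m θ₂ x)
    rw [hm_affine]
    exact hφ.convexOn.2 (hm_mem θ₁ hθ₁ x) (hm_mem θ₂ hθ₂ x) ha.le hb.le hab
  · refine fun h => hpq (measure_mono_null (fun x hx => ?_) h)
    show φ (m _ x) < a * φ (m θ₁ x) + b * φ (m θ₂ x)
    rw [hm_affine]
    exact hφ.2 (hm_mem θ₁ hθ₁ x) (hm_mem θ₂ hθ₂ x) (hm_ne hx) ha hb hab

theorem abs_mul_log_le {t : ℝ} (ht : 0 ≤ t) : |t * log t| ≤ 4 * t ^ (3 / 4 : ℝ) + t ^ 2 := by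
  have ht34 : 0 ≤ t ^ (3 / 4 : ℝ) := rpow_nonneg ht _
  rcases le_or_gt t 1 with h1 | h1
  · rcases ht.eq_or_lt with rfl | h0
    · simp
    have hsmall : |log t * t ^ (1 / 4 : ℝ)| < 4 := by
      simpa using abs_log_mul_self_rpow_lt t (1 / 4) h0 h1 (by norm_num)
    have hsplit : t * log t = t ^ (3 / 4 : ℝ) * (log t * t ^ (1 / 4 : ℝ)) := by
      calc t * log t = t ^ (3 / 4 + 1 / 4 : ℝ) * log t := by norm_num
        _ = _ := by rw [rpow_add h0]; ring
    rw [hsplit, abs_mul, abs_of_nonneg ht34]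
    nlinarith [mul_le_mul_of_nonneg_left hsmall.le ht34]
  · have hlog : 0 ≤ log t := log_nonneg h1.le
    rw [abs_of_nonneg (mul_nonneg ht hlog)]
    nlinarith [log_le_sub_one_of_pos (zero_lt_one.trans h1)]

theorem integrable_mul_log_of_le_mul_inv_one_add_sq {f : ℝ → ℝ} (hf : Measurable f)
    (hf₀ : ∀ x, 0 ≤ f x) {K : ℝ} (hK : ∀ x, f x ≤ K * (1 + x ^ 2)⁻¹) :
    Integrable (fun x => f x * log (f x)) := by
  have hK₀ : 0 ≤ K := by simpa using (hf₀ 0).trans (hK 0)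
  have h34 : Integrable (fun x : ℝ => (1 + x ^ 2) ^ (-(3 / 4) : ℝ)) := by
    have := integrable_rpow_neg_one_add_norm_sq (μ := volume) (E := ℝ) (r := 3 / 2)
      (by norm_num)
    simpa [show (-(3 / 2) / 2 : ℝ) = -(3 / 4) by norm_num] using this
  refine ((h34.const_mul (4 * K ^ (3 / 4 : ℝ))).add
    (integrable_inv_one_add_sq.const_mul (K ^ 2))).mono' (hf.mul hf.log).aestronglyMeasurable
    (ae_of_all _ fun x => ?_)
  have hx : 0 < 1 + x ^ 2 := by positivity
  have hinv_le : (1 + x ^ 2)⁻¹ ≤ 1 := inv_le_one_of_one_le₀ (by nlinarith)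
  have hpow : f x ^ (3 / 4 : ℝ) ≤ K ^ (3 / 4 : ℝ) * (1 + x ^ 2) ^ (-(3 / 4) : ℝ) := by
    rw [rpow_neg hx.le, ← inv_rpow hx.le, ← mul_rpow hK₀ (inv_nonneg.2 hx.le)]
    exact rpow_le_rpow (hf₀ x) (hK x) (by norm_num)
  have hsq : f x ^ 2 ≤ K ^ 2 * (1 + x ^ 2)⁻¹ := by
    calc f x ^ 2 ≤ (K * (1 + x ^ 2)⁻¹) ^ 2 := pow_le_pow_left₀ (hf₀ x) (hK x) 2
      _ ≤ K ^ 2 * (1 + x ^ 2)⁻¹ := by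
        rw [mul_pow]
        exact mul_le_mul_of_nonneg_left (pow_le_of_le_one (by positivity) hinv_le two_ne_zero)
          (sq_nonneg K)
  rw [norm_eq_abs, Pi.add_apply]
  nlinarith [abs_mul_log_le (hf₀ x)]

theorem cauchyPdf_pos {l s : ℝ} (hs : 0 < s) (x : ℝ) : 0 < cauchyPdf l s x := by
  unfold cauchyPdf; positivity

theorem continuous_cauchyPdf {l s : ℝ} (hs : 0 < s) : Continuous (cauchyPdf l s) :=
  continuous_const.div (by fun_prop) fun x => by positivity

theorem cauchyPdf_le_mul_inv_one_add_sq {s : ℝ} (l : ℝ) (hs : 0 < s) (x : ℝ) :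
    cauchyPdf l s x ≤ (1 + 2 * l ^ 2 + 2 * s ^ 2) / (π * s) * (1 + x ^ 2)⁻¹ := by
  have key : s ^ 2 * (1 + x ^ 2) ≤ (1 + 2 * l ^ 2 + 2 * s ^ 2) * (s ^ 2 + (x - l) ^ 2) := by
    nlinarith [sq_nonneg (x - 2 * l), sq_nonneg (s * (x - l)), sq_nonneg (x - l)]
  rw [cauchyPdf, div_mul_eq_mul_div, ← div_eq_mul_inv,
    div_div, div_le_div_iff₀ (by positivity) (by positivity)]
  nlinarith [mul_le_mul_of_nonneg_left key (mul_pos pi_pos hs).le]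

theorem cauchyPdf_inj {l₀ l₁ s₀ s₁ : ℝ} (hs₀ : 0 < s₀) (hs₁ : 0 < s₁) :
    cauchyPdf l₀ s₀ = cauchyPdf l₁ s₁ ↔ l₀ = l₁ ∧ s₀ = s₁ := by
  refine ⟨fun h => ?_, fun ⟨hl, hs⟩ => hl ▸ hs ▸ rfl⟩
  have key (x : ℝ) : s₀ * (s₁ ^ 2 + (x - l₁) ^ 2) = s₁ * (s₀ ^ 2 + (x - l₀) ^ 2) := by
    have := congrFun h x
    rw [cauchyPdf, cauchyPdf, div_eq_div_iff (by positivity) (by positivity)] at this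
    exact mul_left_cancel₀ pi_ne_zero (by linear_combination this)
  -- Evaluating at the two locations: adding these gives `(s₀ - s₁)² + 2 (l₀ - l₁)² = 0`.
  have h₀ : s₁ ^ 2 + (l₀ - l₁) ^ 2 = s₀ * s₁ :=
    mul_left_cancel₀ hs₀.ne' (by linear_combination key l₀)
  have h₁ : s₀ ^ 2 + (l₁ - l₀) ^ 2 = s₀ * s₁ :=
    mul_left_cancel₀ hs₁.ne' (by linear_combination -key l₁)
  constructor <;> nlinarith [sq_nonneg (s₀ - s₁), sq_nonneg (l₀ - l₁)]

theorem integrable_cauchyPdf_mixture_mul_log {l₀ l₁ s₀ s₁ θ : ℝ} (hs₀ : 0 < s₀) (hs₁ : 0 < s₁)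
    (hθ : θ ∈ Icc (0 : ℝ) 1) :
    Integrable (fun x => ((1 - θ) * cauchyPdf l₀ s₀ x + θ * cauchyPdf l₁ s₁ x) *
      log ((1 - θ) * cauchyPdf l₀ s₀ x + θ * cauchyPdf l₁ s₁ x)) := by
  have hp := cauchyPdf_pos (l := l₀) hs₀
  have hq := cauchyPdf_pos (l := l₁) hs₁
  have hθ' : 0 ≤ 1 - θ := sub_nonneg.2 hθ.2
  refine integrable_mul_log_of_le_mul_inv_one_add_sq
    (K := (1 + 2 * l₀ ^ 2 + 2 * s₀ ^ 2) / (π * s₀) + (1 + 2 * l₁ ^ 2 + 2 * s₁ ^ 2) / (π * s₁))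
    ((continuous_const.mul (continuous_cauchyPdf hs₀)).add
      (continuous_const.mul (continuous_cauchyPdf hs₁))).measurable
    (fun x => add_nonneg (mul_nonneg hθ' (hp x).le) (mul_nonneg hθ.1 (hq x).le)) (fun x => ?_)
  rw [add_mul]
  nlinarith [cauchyPdf_le_mul_inv_one_add_sq l₀ hs₀ x, cauchyPdf_le_mul_inv_one_add_sq l₁ hs₁ x,
    mul_nonneg hθ.1 (hp x).le, mul_nonneg hθ' (hq x).le]

/-- The Shannon negentropy of the mixture of two distinct Cauchy densities is a
strictly convex function of the mixing parameter on `(0,1)`. -/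
theorem negentropy_strictConvexOn (l0 l1 s0 s1 : ℝ) (hs0 : 0 < s0) (hs1 : 0 < s1)
    (hne : (l0, s0) ≠ (l1, s1)) :
    StrictConvexOn ℝ (Set.Ioo (0 : ℝ) 1)
      (fun θ : ℝ =>
        ∫ x : ℝ, ((1 - θ) * cauchyPdf l0 s0 x + θ * cauchyPdf l1 s1 x) *
          Real.log ((1 - θ) * cauchyPdf l0 s0 x + θ * cauchyPdf l1 s1 x)) := by
  have hdistinct : ¬ cauchyPdf l0 s0 =ᵐ[volume] cauchyPdf l1 s1 := by
    rw [(continuous_cauchyPdf hs0).ae_eq_iff_eq volume (continuous_cauchyPdf hs1),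
      cauchyPdf_inj hs0 hs1]
    exact fun h => hne (Prod.ext h.1 h.2)
  have hmixture := strictConvexOn_integral_comp_mixture strictConvexOn_mul_log
    (fun x => (cauchyPdf_pos hs0 x).le) (fun x => (cauchyPdf_pos hs1 x).le)
    (fun θ hθ => integrable_cauchyPdf_mixture_mul_log hs0 hs1 hθ) hdistinct
  exact hmixture.subset Ioo_subset_Icc_self (convex_Ioo 0 1)
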